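/- arXiv:1410.4785 — 3 statements merged into one kernel-verified Lean document; each statement's English description precedes it below -/
import Mathlib

section
/- Let m ≥ 3 and ε ∈ 𝔽₂. The 𝔽₂-dimension of the code C^ε equals 2^{m−1}·(2^m + (−1)^ε) − (2m + 1), where (−1)^ε means +1 if ε = 0 and −1 if ε = 1. (That is, C^ε is an [f_ε(m), f_ε(m) − (2m+1), 4] code with f_ε(m) = 2^{m−1}(2^m+(−1)^ε).) -/
open Matrix

/-- Row vectors in `𝔽₂^{2m}`, with coordinates indexed by `Fin m ⊕ Fin m`
(the first block and the second block of `m` coordinates). -/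
abbrev Vm (m : ℕ) := (Fin m ⊕ Fin m) → ZMod 2

/-- The block matrix `e = (0 Iₘ; 0 0)`. -/
def eMat (m : ℕ) : Matrix (Fin m ⊕ Fin m) (Fin m ⊕ Fin m) (ZMod 2) :=
  Matrix.fromBlocks 0 1 0 0

/-- The block matrix `f = e + eᵀ = (0 Iₘ; Iₘ 0)`. -/
def fMat (m : ℕ) : Matrix (Fin m ⊕ Fin m) (Fin m ⊕ Fin m) (ZMod 2) :=
  eMat m + (eMat m)ᵀ

/-- The alternating bilinear form `φ(u,v) = u f vᵀ`. -/
def phi (m : ℕ) (u v : Vm m) : ZMod 2 := u ⬝ᵥ (fMat m).mulVec v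

/-- The quadratic form `θ₀(u) = u e uᵀ`. -/
def theta0 (m : ℕ) (u : Vm m) : ZMod 2 := u ⬝ᵥ (eMat m).mulVec u

/-- The quadratic form `θ_a(u) = θ₀(u) + φ(u,a)`. -/
def theta (m : ℕ) (a u : Vm m) : ZMod 2 := theta0 m u + phi m u a

/-- The transvection `t_c : u ↦ u + φ(u,c)·c`. -/
def tvec (m : ℕ) (c u : Vm m) : Vm m := u + phi m u c • c

/-- The point set `V^ε = {v : θ₀(v) = ε}` as a subtype. -/
abbrev Veps (m : ℕ) (ε : ZMod 2) := {v : Vm m // theta0 m v = ε}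

/-- The characteristic vector of a finite set. -/
def chi {α : Type*} [DecidableEq α] (S : Finset α) : α → ZMod 2 :=
  fun x => if x ∈ S then 1 else 0

/-- The code `C^ε`: the `𝔽₂`-span of the characteristic vectors of
4-element subsets of `V^ε` summing to zero. -/
def Ceps (m : ℕ) (ε : ZMod 2) : Submodule (ZMod 2) (Veps m ε → ZMod 2) :=
  Submodule.span (ZMod 2)
    {w | ∃ S : Finset (Veps m ε), S.card = 4 ∧ (∑ x ∈ S, (x : Vm m)) = 0 ∧ w = chi S}

/-- The code `C^a`: the `𝔽₂`-span of the characteristic vectors of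
4-element subsets of `V` summing to zero whose `θ₀`-values sum to zero. -/
def Ca (m : ℕ) : Submodule (ZMod 2) (Vm m → ZMod 2) :=
  Submodule.span (ZMod 2)
    {w | ∃ T : Finset (Vm m), T.card = 4 ∧ (∑ x ∈ T, x) = 0 ∧
         (∑ x ∈ T, theta0 m x) = 0 ∧ w = chi T}

/-!
For the standard dot product on `V^ε → 𝔽₂`, the orthogonal complement of `C^ε` consists of the
`g` summing to zero over every zero-sum 4-subset of `V^ε`. Such a `g` satisfies
`g x + g y = g x' + g y'` whenever `x + y = x' + y'`, so `β (x + y) := g x + g y` is well defined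
on `V`; if any `z, z'` admit a `u` with `u, u + z, u + z' ∈ V^ε`, then `β` is additive and `g` is
the restriction of an affine function. The quadric `V^ε` has this property for `m ≥ 3`: a
nondegenerate quadratic form on a space of dimension at least 5 takes both values on every coset
of a subspace of codimension at most 2, because such a subspace is not totally isotropic.
Restriction to `V^ε` is injective on the `(2m + 1)`-dimensional space of affine functions, and
`|V^ε| = 2^{m-1}(2^m + (-1)^ε)` by counting the solutions of `x ⬝ᵥ y = ε` over `x`.
-/

open Module QuadraticMap

lemma ZMod.eq_zero_or_eq_one (a : ZMod 2) : a = 0 ∨ a = 1 := by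
  revert a; decide

section Functionals

variable {V : Type*} [AddCommGroup V] [Module (ZMod 2) V]

lemma LinearMap.exists_apply_eq_one {f : V →ₗ[ZMod 2] ZMod 2} (hf : f ≠ 0) : ∃ u, f u = 1 := by
  obtain ⟨u, hu⟩ := DFunLike.ne_iff.mp hf
  exact ⟨u, (f u).eq_zero_or_eq_one.resolve_left hu⟩

lemma LinearMap.exists_apply_eq_one_apply_eq_zero {f f' : V →ₗ[ZMod 2] ZMod 2} (hf : f ≠ 0)
    (hff' : f ≠ f') : ∃ u, f u = 1 ∧ f' u = 0 := by
  obtain ⟨u, hu⟩ := exists_apply_eq_one hf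
  obtain ⟨w, hw⟩ := exists_apply_eq_one (sub_ne_zero.mpr hff')
  rw [sub_apply] at hw
  rcases (f' u).eq_zero_or_eq_one with hu' | hu'
  · exact ⟨u, hu, hu'⟩
  rcases (f w).eq_zero_or_eq_one with hw' | hw'
  · refine ⟨u + w, ?_, ?_⟩ <;> simp only [map_add] <;> grind
  · exact ⟨w, hw', by grind⟩

lemma LinearMap.exists_apply_eq_apply_eq {f f' : V →ₗ[ZMod 2] ZMod 2} (hf : f ≠ 0) (hf' : f' ≠ 0)
    (hff' : f ≠ f') (a a' : ZMod 2) : ∃ u, f u = a ∧ f' u = a' := by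
  obtain ⟨u, hu, hu'⟩ := exists_apply_eq_one_apply_eq_zero hf hff'
  obtain ⟨w, hw', hw⟩ := exists_apply_eq_one_apply_eq_zero hf' hff'.symm
  exact ⟨a • u + a' • w, by simp [hu, hw], by simp [hu', hw']⟩

open Finset in
lemma LinearMap.two_mul_card_filter_apply_eq [Fintype V] {f : V →ₗ[ZMod 2] ZMod 2} (hf : f ≠ 0)
    (a : ZMod 2) : 2 * #{v | f v = a} = Fintype.card V := by
  obtain ⟨u, hu⟩ := exists_apply_eq_one hf
  have hsurj (b : ZMod 2) : b ∈ Set.range f := ⟨b • u, by simp [hu]⟩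
  have hfib := AddMonoidHom.card_fiber_eq_of_mem_range f (hsurj a) (hsurj (a + 1))
  have hsplit := card_filter_add_card_filter_not (s := univ) (fun v ↦ f v = a)
  have hne : ∀ a b : ZMod 2, b ≠ a ↔ b = a + 1 := by decide
  simp only [hne a, card_univ] at hsplit
  omega

end Functionals

section FiniteDimensional

variable {K V : Type*} [Field K] [AddCommGroup V] [Module K V] [FiniteDimensional K V]

lemma LinearMap.BilinForm.exists_apply_ne_zero_of_finrank_lt {B : LinearMap.BilinForm K V}
    (hB : B.Nondegenerate) {W : Submodule K V} (hW : finrank K V < 2 * finrank K W) :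
    ∃ w ∈ W, ∃ w' ∈ W, B w w' ≠ 0 := by
  by_contra! h
  have hle : finrank K W ≤ finrank K (B.orthogonal W) :=
    Submodule.finrank_mono fun w hw n hn ↦ h n hn w hw
  rw [finrank_orthogonal hB] at hle
  omega

lemma LinearMap.finrank_le_finrank_ker_inf_ker_add_two (f f' : V →ₗ[K] K) :
    finrank K V ≤ finrank K ↥(LinearMap.ker f ⊓ LinearMap.ker f') + 2 := by
  rw [← LinearMap.ker_prod]
  have := (f.prod f').finrank_range_add_finrank_ker
  have := (LinearMap.range (f.prod f')).finrank_le
  simp only [finrank_prod, finrank_self] at this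
  omega

end FiniteDimensional

namespace QuadraticMap

variable {V : Type*} [AddCommGroup V] [Module (ZMod 2) V] {Q : QuadraticForm (ZMod 2) V}

lemma flip_polarBilin_injective (hQ : (polarBilin Q).Nondegenerate) :
    Function.Injective (polarBilin Q).flip :=
  LinearMap.ker_eq_bot.mp (LinearMap.separatingRight_iff_flip_ker_eq_bot.mp hQ.2)

variable [FiniteDimensional (ZMod 2) V] (hQ : (polarBilin Q).Nondegenerate)
  (hV : 5 ≤ finrank (ZMod 2) V)
include hQ hV

lemma exists_eq_and_apply_eq_and_apply_eq (f f' : Dual (ZMod 2) V) (u₀ : V) (ε : ZMod 2) :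
    ∃ u, Q u = ε ∧ f u = f u₀ ∧ f' u = f' u₀ := by
  have hW := LinearMap.finrank_le_finrank_ker_inf_ker_add_two f f'
  set W := LinearMap.ker f ⊓ LinearMap.ker f'
  obtain ⟨w, hw, w', hw', hww'⟩ :=
    LinearMap.BilinForm.exists_apply_ne_zero_of_finrank_lt hQ (W := W) (by omega)
  rw [polarBilin_apply_apply] at hww'
  -- the second difference of `Q` along `w, w'` is `polar Q w w' = 1`
  have hsum : Q u₀ + Q (u₀ + w) + Q (u₀ + w') + Q (u₀ + w + w') = 1 := by
    rw [QuadraticMap.map_add Q (u₀ + w) w', QuadraticMap.map_add Q u₀ w', polar_add_left,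
      (polar Q w w').eq_zero_or_eq_one.resolve_left hww']
    grind
  by_contra! h
  have hne : ∀ v ∈ W, Q (u₀ + v) ≠ ε := fun v hv hQv ↦
    h _ hQv (by simp [LinearMap.mem_ker.mp hv.1]) (by simp [LinearMap.mem_ker.mp hv.2])
  have key : ∀ a b c d e : ZMod 2, a ≠ e → b ≠ e → c ≠ e → d ≠ e → a + b + c + d ≠ 1 := by
    decide
  refine key _ _ _ _ ε (by simpa using hne 0 W.zero_mem) (hne w hw) (hne w' hw') ?_ hsum
  simpa [add_assoc] using hne _ (W.add_mem hw hw')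

lemma exists_eq_and_add_eq (ε : ZMod 2) (z : V) : ∃ u, Q u = ε ∧ Q (u + z) = ε := by
  obtain rfl | hz := eq_or_ne z 0
  · obtain ⟨u, hu, -⟩ := exists_eq_and_apply_eq_and_apply_eq hQ hV 0 0 0 ε
    exact ⟨u, hu, by rwa [add_zero]⟩
  obtain ⟨u₁, hu₁⟩ := LinearMap.exists_apply_eq_one
    ((map_ne_zero_iff _ (flip_polarBilin_injective hQ)).mpr hz)
  obtain ⟨u, hu, hpol, -⟩ := exists_eq_and_apply_eq_and_apply_eq hQ hV
    ((polarBilin Q).flip z) 0 (Q z • u₁) ε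
  simp only [LinearMap.flip_apply, polarBilin_apply_apply, map_smul, hu₁, smul_eq_mul,
    mul_one] at hpol
  exact ⟨u, hu, by rw [QuadraticMap.map_add Q, hu, hpol, CharTwo.add_cancel_right]⟩

lemma exists_eq_and_add_eq_and_add_eq (ε : ZMod 2) (z z' : V) :
    ∃ u, Q u = ε ∧ Q (u + z) = ε ∧ Q (u + z') = ε := by
  obtain rfl | hz := eq_or_ne z 0
  · simpa using exists_eq_and_add_eq hQ hV ε z'
  obtain rfl | hz' := eq_or_ne z' 0
  · obtain ⟨u, hu, hu'⟩ := exists_eq_and_add_eq hQ hV ε z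
    exact ⟨u, hu, hu', by rwa [add_zero]⟩
  obtain rfl | hzz' := eq_or_ne z z'
  · simpa using exists_eq_and_add_eq hQ hV ε z
  have hinj := flip_polarBilin_injective hQ
  obtain ⟨u₀, hu₀, hu₀'⟩ := LinearMap.exists_apply_eq_apply_eq
    ((map_ne_zero_iff _ hinj).mpr hz) ((map_ne_zero_iff _ hinj).mpr hz') (hinj.ne hzz') (Q z) (Q z')
  obtain ⟨u, hu, hpol, hpol'⟩ := exists_eq_and_apply_eq_and_apply_eq hQ hV
    ((polarBilin Q).flip z) ((polarBilin Q).flip z') u₀ ε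
  simp only [LinearMap.flip_apply, polarBilin_apply_apply] at hu₀ hu₀' hpol hpol'
  refine ⟨u, hu, ?_, ?_⟩
  · rw [QuadraticMap.map_add Q, hu, hpol, hu₀, CharTwo.add_cancel_right]
  · rw [QuadraticMap.map_add Q, hu, hpol', hu₀', CharTwo.add_cancel_right]

end QuadraticMap

section FourSumCode

variable {V : Type*} [AddCommMonoid V] [DecidableEq V] {p : V → Prop}

def fourSumCode (p : V → Prop) : Submodule (ZMod 2) ({v // p v} → ZMod 2) :=
  Submodule.span (ZMod 2)
    {w | ∃ S : Finset {v // p v}, S.card = 4 ∧ (∑ x ∈ S, (x : V)) = 0 ∧ w = chi S}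

lemma chi_dotProduct {ι : Type*} [Fintype ι] [DecidableEq ι] (S : Finset ι) (g : ι → ZMod 2) :
    chi S ⬝ᵥ g = ∑ x ∈ S, g x := by
  simp [chi, dotProduct, Finset.sum_ite_mem]

lemma Matrix.dotProductBilin_nondegenerate (ι : Type*) [Fintype ι] :
    (dotProductBilin (ZMod 2) (ZMod 2) : LinearMap.BilinForm (ZMod 2) (ι → ZMod 2)).Nondegenerate :=
  ⟨fun v h ↦ dotProduct_eq_zero v h,
    fun w h ↦ dotProduct_eq_zero w fun v ↦ by rw [dotProduct_comm]; exact h v⟩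

lemma mem_orthogonal_fourSumCode_iff [Fintype {v // p v}] {g : {v // p v} → ZMod 2} :
    g ∈ LinearMap.BilinForm.orthogonal (dotProductBilin (ZMod 2) (ZMod 2)) (fourSumCode p) ↔
      ∀ S : Finset {v // p v}, S.card = 4 → ∑ x ∈ S, (x : V) = 0 → ∑ x ∈ S, g x = 0 := by
  change fourSumCode p ≤ LinearMap.ker ((dotProductBilin (ZMod 2) (ZMod 2)).flip g) ↔ _
  rw [fourSumCode, Submodule.span_le]
  constructor
  · intro h S hS hsum
    simpa [chi_dotProduct] using h ⟨S, hS, hsum, rfl⟩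
  · rintro h _ ⟨S, hS, hsum, rfl⟩
    simpa [chi_dotProduct] using h S hS hsum

end FourSumCode

section AffineFunctions

variable {V : Type*} [AddCommGroup V] [Module (ZMod 2) V] {p : V → Prop}

lemma ZModModule.add_eq_zero_iff_eq {x y : V} : x + y = 0 ↔ x = y := by
  rw [add_eq_zero_iff_eq_neg, ZModModule.neg_eq_self]

def affineRestrict (p : V → Prop) :
    (Dual (ZMod 2) V × ZMod 2) →ₗ[ZMod 2] ({v // p v} → ZMod 2) :=
  (LinearMap.pi fun x : {v // p v} ↦ LinearMap.applyₗ (x : V)).coprod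
    (LinearMap.pi fun _ ↦ LinearMap.id)

@[simp]
lemma affineRestrict_apply (ℓ : Dual (ZMod 2) V) (c : ZMod 2) (x : {v // p v}) :
    affineRestrict p (ℓ, c) x = ℓ x + c :=
  rfl

lemma affineRestrict_injective (hp : ∀ z, ∃ u, p u ∧ p (u + z)) :
    Function.Injective (affineRestrict p) := by
  rw [← LinearMap.ker_eq_bot, LinearMap.ker_eq_bot']
  rintro ⟨ℓ, c⟩ h
  have h' (x : {v // p v}) : ℓ x + c = 0 := congrFun h x
  have hℓ : ℓ = 0 := LinearMap.ext fun z ↦ by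
    obtain ⟨u, hu, huz⟩ := hp z
    have := h' ⟨u + z, huz⟩
    rwa [map_add, add_right_comm, h' ⟨u, hu⟩, zero_add] at this
  obtain ⟨u, hu, -⟩ := hp 0
  simpa [hℓ] using h' ⟨u, hu⟩

variable {g : {v // p v} → ZMod 2}
  (hg : ∀ S : Finset {v // p v}, S.card = 4 → ∑ x ∈ S, (x : V) = 0 → ∑ x ∈ S, g x = 0)
include hg

lemma apply_add_apply_eq_of_add_eq {a b c d : {v // p v}} (h : (a : V) + b = c + d) :
    g a + g b = g c + g d := by
  classical
  have cancel {x y z : {v // p v}} (h : (x : V) + y = x + z) : y = z :=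
    Subtype.ext (add_left_cancel h)
  have eq_of_add {x y z : {v // p v}} (h : (x : V) + y = z + z) : x = y :=
    Subtype.ext (ZModModule.add_eq_zero_iff_eq.mp (h.trans (ZModModule.add_self _)))
  by_cases hab : a = b
  · rw [hab, eq_of_add (h.symm.trans (by rw [hab, ZModModule.add_self])),
      CharTwo.add_self_eq_zero, CharTwo.add_self_eq_zero]
  by_cases hac : a = c
  · subst hac; rw [cancel h]
  by_cases had : a = d
  · subst had; rw [cancel (h.trans (add_comm _ _)), add_comm]
  have hbc : b ≠ c := by rintro rfl; exact had (cancel ((add_comm _ _).trans h))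
  have hbd : b ≠ d := by rintro rfl; exact hac (Subtype.ext (add_right_cancel h))
  have hcd : c ≠ d := by rintro rfl; exact hab (eq_of_add h)
  have := hg {a, b, c, d} (by simp [Finset.card_insert_of_notMem, *])
    (by simp [Finset.sum_insert, *, ← add_assoc, add_assoc ((c : V) + d), ZModModule.add_self])
  simp only [Finset.mem_insert, Finset.mem_singleton, hab, hac, had, hbc, hbd, hcd, or_self,
    not_false_eq_true, Finset.sum_insert, Finset.sum_singleton] at this
  rwa [← add_assoc, CharTwo.add_eq_zero] at this

variable (hp : ∀ z z' : V, ∃ u, p u ∧ p (u + z) ∧ p (u + z'))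
include hp

lemma exists_linearMap_apply_add_eq :
    ∃ ℓ : V →ₗ[ZMod 2] ZMod 2, ∀ x y : {v // p v}, ℓ (x + y) = g x + g y := by
  choose u hu hu' _ using fun z ↦ hp z z
  let β (z : V) : ZMod 2 := g ⟨u z, hu z⟩ + g ⟨u z + z, hu' z⟩
  have hβ (x y : {v // p v}) : β (x + y) = g x + g y :=
    apply_add_apply_eq_of_add_eq hg (by simp only [← add_assoc, ZModModule.add_self, zero_add])
  have hβ_add (z z' : V) : β (z + z') = β z + β z' := by
    obtain ⟨v, hv, hvz, hvz'⟩ := hp z z'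
    have h₁ := hβ ⟨v, hv⟩ ⟨v + z, hvz⟩
    have h₂ := hβ ⟨v, hv⟩ ⟨v + z', hvz'⟩
    have h₃ := hβ ⟨v + z, hvz⟩ ⟨v + z', hvz'⟩
    simp only [← add_assoc, ZModModule.add_self, zero_add] at h₁ h₂
    dsimp only at h₃
    rw [add_add_add_comm, ZModModule.add_self, zero_add] at h₃
    rw [h₁, h₂, h₃, add_comm (g ⟨v, hv⟩), ZModModule.add_add_add_cancel]
  exact ⟨(AddMonoidHom.mk' β hβ_add).toZModLinearMap 2, hβ⟩

lemma exists_dual_eq_add_const :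
    ∃ (ℓ : Dual (ZMod 2) V) (c : ZMod 2), ∀ x : {v // p v}, g x = ℓ x + c := by
  obtain ⟨ℓ, hℓ⟩ := exists_linearMap_apply_add_eq hg hp
  obtain ⟨x₀, hx₀, -⟩ := hp 0 0
  let y : {v // p v} := ⟨x₀, hx₀⟩
  refine ⟨ℓ, ℓ y + g y, fun x ↦ ?_⟩
  rw [← add_assoc, ← map_add, hℓ, add_assoc, CharTwo.add_self_eq_zero, add_zero]

end AffineFunctions

section Dimension

variable {V : Type*} [AddCommGroup V] [Module (ZMod 2) V] [DecidableEq V] {p : V → Prop}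
  (hp : ∀ z z' : V, ∃ u, p u ∧ p (u + z) ∧ p (u + z'))
include hp

lemma orthogonal_fourSumCode [Fintype {v // p v}] :
    LinearMap.BilinForm.orthogonal (dotProductBilin (ZMod 2) (ZMod 2)) (fourSumCode p) =
      LinearMap.range (affineRestrict p) := by
  ext g
  rw [mem_orthogonal_fourSumCode_iff, LinearMap.mem_range]
  constructor
  · intro hg
    obtain ⟨ℓ, c, h⟩ := exists_dual_eq_add_const hg hp
    exact ⟨(ℓ, c), funext fun x ↦ (h x).symm⟩
  · rintro ⟨⟨ℓ, c⟩, rfl⟩ S hS hsum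
    simp [Finset.sum_add_distrib, ← map_sum, hsum, hS, show (4 : ZMod 2) = 0 by decide]

theorem finrank_fourSumCode [Finite V] :
    finrank (ZMod 2) (fourSumCode p) = Nat.card {v // p v} - (finrank (ZMod 2) V + 1) := by
  have := Fintype.ofFinite {v // p v}
  have h := LinearMap.BilinForm.finrank_orthogonal (Matrix.dotProductBilin_nondegenerate _)
    (fourSumCode p)
  rw [orthogonal_fourSumCode hp, LinearMap.finrank_range_of_inj (affineRestrict_injective
      fun z ↦ (hp z z).imp fun _ hu ↦ hu.imp_right And.left),
    finrank_prod, Subspace.dual_finrank_eq, finrank_self, finrank_fintype_fun_eq_card] at h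
  have := (fourSumCode p).finrank_le
  rw [finrank_fintype_fun_eq_card] at this
  rw [Nat.card_eq_fintype_card]
  omega

end Dimension

section Hyperbolic

variable {m : ℕ}

lemma toQuadraticForm'_eMat_apply (u : Vm m) : (eMat m).toQuadraticForm' u = theta0 m u := by
  simp [Matrix.toQuadraticForm', theta0, Matrix.toLinearMap₂'_apply']

lemma fMat_mul_fMat : fMat m * fMat m = 1 := by
  simp [fMat, eMat, fromBlocks_transpose, fromBlocks_add, fromBlocks_multiply, ← fromBlocks_one]

lemma polarBilin_toQuadraticForm'_eMat :
    polarBilin (eMat m).toQuadraticForm' = Matrix.toLinearMap₂' (ZMod 2) (fMat m) := by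
  refine LinearMap.ext₂ fun u v ↦ ?_
  rw [polarBilin_apply_apply, Matrix.toQuadraticForm', LinearMap.BilinMap.polar_toQuadraticMap]
  simp only [Matrix.toLinearMap₂'_apply', fMat, add_mulVec, dotProduct_add, mulVec_transpose,
    dotProduct_comm u (v ᵥ* _), ← dotProduct_mulVec]

lemma nondegenerate_polarBilin_toQuadraticForm'_eMat :
    (polarBilin (eMat m).toQuadraticForm').Nondegenerate := by
  rw [polarBilin_toQuadraticForm'_eMat]
  refine LinearMap.nondegenerate_toLinearMap₂'_of_det_ne_zero' fun h ↦ ?_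
  simpa [h] using congrArg det (fMat_mul_fMat (m := m))

lemma finrank_Vm : finrank (ZMod 2) (Vm m) = 2 * m := by
  simp [two_mul]

lemma theta0_eq_dotProduct (u : Vm m) : theta0 m u = (u ∘ Sum.inl) ⬝ᵥ (u ∘ Sum.inr) := by
  simp [theta0, eMat, dotProduct, Fintype.sum_sum_type, fromBlocks_mulVec]

open Finset in
lemma card_Veps (hm : 0 < m) (ε : ZMod 2) :
    Nat.card (Veps m ε) =
      if ε = 0 then 2 ^ (m - 1) * (2 ^ m + 1) else 2 ^ (m - 1) * (2 ^ m - 1) := by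
  let e : Veps m ε ≃ {p : (Fin m → ZMod 2) × (Fin m → ZMod 2) // p.1 ⬝ᵥ p.2 = ε} :=
    (Equiv.sumArrowEquivProdArrow _ _ _).subtypeEquiv fun u ↦ by rw [theta0_eq_dotProduct]; rfl
  have hpow : 2 ^ m = 2 * 2 ^ (m - 1) := by rw [← pow_succ', Nat.sub_add_cancel hm]
  have hfib (x : Fin m → ZMod 2) (hx : x ≠ 0) : #{y | x ⬝ᵥ y = ε} = 2 ^ (m - 1) := by
    have := (dotProductBilin (ZMod 2) (ZMod 2) x).two_mul_card_filter_apply_eq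
      (fun h ↦ hx (dotProduct_eq_zero x (LinearMap.congr_fun h))) ε
    simp only [dotProductBilin_apply_apply, Fintype.card_fun, ZMod.card, Fintype.card_fin] at this
    omega
  rw [Nat.card_congr e, Nat.card_eq_fintype_card, Fintype.card_subtype, card_filter,
    Fintype.sum_prod_type, ← add_sum_erase _ _ (mem_univ 0)]
  simp only [← card_filter]
  rw [sum_congr rfl fun x hx ↦ hfib x (ne_of_mem_erase hx), sum_const, card_erase_of_mem
    (mem_univ _), card_univ, Fintype.card_fun, ZMod.card, Fintype.card_fin, smul_eq_mul]
  rcases ε.eq_zero_or_eq_one with rfl | rfl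
  · simp only [zero_dotProduct, filter_true, card_univ, Fintype.card_fun, ZMod.card,
      Fintype.card_fin, if_true, hpow]
    obtain ⟨k, hk⟩ : ∃ k, 2 ^ (m - 1) = k + 1 := ⟨_, (Nat.succ_pred_eq_of_pos (by positivity)).symm⟩
    rw [hk, show 2 * (k + 1) - 1 = 2 * k + 1 by omega]
    ring
  · simp [mul_comm]

end Hyperbolic

theorem stmt_15 (m : ℕ) (hm : 3 ≤ m) (ε : ZMod 2) :
    Module.finrank (ZMod 2) (Ceps m ε) =
      (if ε = 0 then 2 ^ (m - 1) * (2 ^ m + 1)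
       else 2 ^ (m - 1) * (2 ^ m - 1)) - (2 * m + 1) := by
  have hp (z z' : Vm m) : ∃ u, theta0 m u = ε ∧ theta0 m (u + z) = ε ∧ theta0 m (u + z') = ε := by
    simpa only [toQuadraticForm'_eMat_apply] using
      exists_eq_and_add_eq_and_add_eq nondegenerate_polarBilin_toQuadraticForm'_eMat
        (by rw [finrank_Vm]; omega) ε z z'
  rw [show Ceps m ε = fourSumCode (theta0 m · = ε) from rfl, finrank_fourSumCode hp,
    card_Veps (by omega), finrank_Vm]
end

section
/- Let D = (Ω,B) be a supersimple 2-(n,4,λ) design and let ∞ ∈ Ω. Suppose that [∞,a]·[a,b]·[b,∞] is the identity permutation of Ω for all distinct points a, b ∈ Ω∖{∞} such that some line of D contains all three of ∞, a, b. Then at least one of the following holds: (1) every element of L(D) has order at most 2, i.e. L(D) is an elementary abelian 2-group (the case of a Boolean design); (2) n = 13 (the exceptional case D = ℙ₃, the projective plane of order 3, with L(D) = M₁₃); or (3) L(D) equals the alternating group on Ω. -/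
/-- `IsDesign B lam`: every line has 4 points, every pair of distinct points
lies on exactly `lam` lines, and any two distinct lines meet in at most 2 points
(supersimplicity). -/
def IsSupersimpleDesign {Ω : Type*} [DecidableEq Ω]
    (B : Finset (Finset Ω)) (lam : ℕ) : Prop :=
  (∀ ℓ ∈ B, ℓ.card = 4) ∧
  (∀ p q : Ω, p ≠ q → (B.filter fun ℓ => p ∈ ℓ ∧ q ∈ ℓ).card = lam) ∧
  (∀ ℓ₁ ∈ B, ∀ ℓ₂ ∈ B, ℓ₁ ≠ ℓ₂ → (ℓ₁ ∩ ℓ₂).card ≤ 2)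

/-- `IsElementaryMove B mv`: the assignment `(a,b) ↦ mv a b` satisfies exactly the
defining properties of the elementary moves `[a,b]` of the design with line set `B`:
`[a,a] = 1`; for `a ≠ b`, `[a,b]` swaps `a` and `b`, swaps `c` and `d` whenever
`{a,b,c,d}` is a line, and fixes every point lying on no line through `a` and `b`. -/
def IsElementaryMove {Ω : Type*} [DecidableEq Ω]
    (B : Finset (Finset Ω)) (mv : Ω → Ω → Equiv.Perm Ω) : Prop :=
  (∀ a : Ω, mv a a = 1) ∧
  (∀ a b : Ω, a ≠ b → mv a b a = b ∧ mv a b b = a) ∧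
  (∀ a b c d : Ω, a ≠ b → ({a, b, c, d} : Finset Ω) ∈ B → mv a b c = d) ∧
  (∀ a b x : Ω, a ≠ b → (∀ ℓ ∈ B, ¬(a ∈ ℓ ∧ b ∈ ℓ ∧ x ∈ ℓ)) → mv a b x = x)

/-- `L(D)`: the subgroup of `Sym(Ω)` generated by all elementary moves. -/
def moveGroup {Ω : Type*} (mv : Ω → Ω → Equiv.Perm Ω) : Subgroup (Equiv.Perm Ω) :=
  Subgroup.closure {σ | ∃ a b : Ω, σ = mv a b}

/-- The hole stabilizer `π_∞(D)`: the subgroup of `Sym(Ω)` generated by the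
closed move sequences `[∞,a][a,b][b,∞]`. -/
def holeStabilizer {Ω : Type*} (mv : Ω → Ω → Equiv.Perm Ω) (inf : Ω) :
    Subgroup (Equiv.Perm Ω) :=
  Subgroup.closure {σ | ∃ a b : Ω, σ = mv inf a * mv a b * mv b inf}

/-!
Write `σ_x = [∞,x]`. The hypothesis says `[a,b] = σ_a σ_b` whenever `∞, a, b` are collinear;
together with supersimplicity this makes collinearity with `∞` an equivalence relation on
`Ω ∖ {∞}`, and the support of `σ_a` is the class of `a` together with `∞`.

If there is a single class, `L(D)` is generated by the pairwise commuting involutions `σ_x`.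
Otherwise, for `a, b` in different classes, `[a,b]` fixes the class of `a` except `a` itself, so
`([a,b] σ_a)²` is the 3-cycle `(a b ∞)`; passing through a point of another class gives every
3-cycle through `∞`, hence `L(D) ⊇ Alt(Ω)`. Conversely, the `σ_x` of one class generate a `2`-group acting
transitively on its `2λ + 2` points, so `λ + 1` is a power of `2` at least `2`: `λ` is odd, and
every move, a product of `λ + 1` disjoint transpositions, is even.
-/

open Equiv

theorem Subgroup.sq_eq_one_of_mem_closure {G : Type*} [Group G] {S : Set G}
    (hcomm : ∀ x ∈ S, ∀ y ∈ S, x * y = y * x) (hsq : ∀ x ∈ S, x ^ 2 = 1)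
    {g : G} (hg : g ∈ Subgroup.closure S) : g ^ 2 = 1 := by
  have hcent := Subgroup.closure_le_centralizer_centralizer S
  induction hg using Subgroup.closure_induction with
  | mem x hx => exact hsq x hx
  | one => exact one_pow 2
  | mul x y hx hy ihx ihy =>
    have hxy : Commute x y :=
      Set.centralizer_centralizer_comm_of_comm hcomm x (hcent hx) y (hcent hy)
    rw [hxy.mul_pow, ihx, ihy, one_mul]
  | inv x _ ih => rw [inv_pow, ih, inv_one]

theorem Finset.exists_eq_insert_of_card_eq_four {α : Type*} [DecidableEq α] {s : Finset α}
    {a b c : α} (hs : s.card = 4) (ha : a ∈ s) (hb : b ∈ s) (hc : c ∈ s)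
    (hab : a ≠ b) (hac : a ≠ c) (hbc : b ≠ c) :
    ∃ d, s = {a, b, c, d} ∧ d ≠ a ∧ d ≠ b ∧ d ≠ c := by
  have habc : ({a, b, c} : Finset α) ⊆ s := by simp [Finset.insert_subset_iff, ha, hb, hc]
  have hcard : (s \ {a, b, c}).card = 1 := by
    rw [Finset.card_sdiff_of_subset habc, hs, Finset.card_insert_of_notMem (by simp [hab, hac]),
      Finset.card_pair hbc]
  obtain ⟨d, hd⟩ := Finset.card_eq_one.1 hcard
  have hds : d ∈ s \ {a, b, c} := hd ▸ Finset.mem_singleton_self d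
  simp only [Finset.mem_sdiff, Finset.mem_insert, Finset.mem_singleton, not_or] at hds
  refine ⟨d, ?_, hds.2.1, hds.2.2.1, hds.2.2.2⟩
  rw [← Finset.union_sdiff_of_subset habc, hd]
  ext x; simp

namespace Equiv.Perm

variable {α : Type*} [DecidableEq α]

theorem alternatingGroup_le_of_swap_mul_swap_mem [Fintype α] {H : Subgroup (Perm α)} (i : α)
    (hH : ∀ p q, p ≠ i → q ≠ i → swap i p * swap i q ∈ H) : alternatingGroup α ≤ H := by
  have key : ∀ a b c, a ≠ b → a ≠ c → b ≠ c → swap a b * swap a c ∈ H := by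
    intro a b c hab hac hbc
    by_cases ha : a = i
    · exact ha ▸ hH b c (ha ▸ hab.symm) (ha ▸ hac.symm)
    by_cases hb : b = i
    · rw [show swap a b * swap a c = swap i c * swap i a by
        subst hb; ext x; simp only [Perm.mul_apply, swap_apply_def]; grind]
      exact hH c a (hb ▸ hbc.symm) ha
    by_cases hc : c = i
    · rw [show swap a b * swap a c = swap i a * swap i b by
        subst hc; ext x; simp only [Perm.mul_apply, swap_apply_def]; grind]
      exact hH a b ha hb
    -- conjugate `(i b)(i c)` by `(i a)`
    rw [show swap a b * swap a c = swap i a * swap i b * (swap i c * swap i a) by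
      ext x; simp only [Perm.mul_apply, swap_apply_def]; grind]
    exact mul_mem (hH a b ha hb) (hH c a hc ha)
  rw [← closure_three_cycles_eq_alternating, Subgroup.closure_le]
  intro g hg
  obtain ⟨a, ha⟩ := Finset.card_pos.1 (hg.card_support ▸ three_pos : 0 < g.support.card)
  have hdistinct := (hg.nodup_iff_mem_support (a := a)).2 ha
  simp only [List.nodup_cons, List.mem_cons, List.not_mem_nil, or_false, not_or] at hdistinct
  obtain ⟨⟨h₁, h₂⟩, h₃, -⟩ := hdistinct
  rw [(hg.eq_swap_mul_swap_iff_mem_support (a := a)).2 ha, swap_comm]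
  exact key _ _ _ (Ne.symm h₁) h₃ h₂

theorem mul_mul_mul_eq_swap_mul_swap {σ τ : Perm α} {a b : α} (hσ : ∀ x, σ (σ x) = x)
    (hτ : ∀ x, τ (τ x) = x) (hτa : τ a = b) (hσa : σ a ≠ a) (hσb : σ b = b)
    (hτσ : ∀ x, σ x ≠ x → x ≠ a → τ x = x) :
    τ * σ * τ * σ = swap (σ a) b * swap (σ a) a := by
  have hτb : τ b = a := hτa ▸ hτ a
  have hab : a ≠ b := fun h => hσa (h ▸ hσb)
  have hcb : σ a ≠ b := fun h => hab (by rw [← hσ a, h, hσb])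
  have hτc : τ (σ a) = σ a := hτσ _ (by rw [hσ]; exact hσa.symm) hσa
  ext x
  simp only [Perm.mul_apply]
  by_cases hxa : x = a
  · subst hxa
    rw [hτc, hσ, hτa, swap_apply_right, swap_apply_left]
  by_cases hxb : x = b
  · subst hxb
    rw [hσb, hτb, hτc, swap_apply_of_ne_of_ne (Ne.symm hcb) hxa, swap_apply_right]
  by_cases hxc : x = σ a
  · subst hxc
    rw [hσ, hτa, hσb, hτb, swap_apply_left, swap_apply_of_ne_of_ne hσa.symm hab]
  rw [swap_apply_of_ne_of_ne hxc hxa, swap_apply_of_ne_of_ne hxc hxb]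
  by_cases hσx : σ x = x
  · have hστx : σ (τ x) = τ x := by
      by_contra h
      have hτxa : τ x ≠ a := fun h' => hxb (by rw [← hτ x, h', hτa])
      have hxτ : τ (τ x) = τ x := hτσ _ h hτxa
      rw [hτ] at hxτ
      exact h (by rw [← hxτ, hσx])
    rw [hσx, hστx, hτ]
  · have hσxa : σ x ≠ a := fun h => hxc (by rw [← hσ x, h])
    rw [hτσ _ (by rw [hσ]; exact Ne.symm hσx) hσxa, hσ, hτσ _ hσx hxa]

theorem sign_eq_one_of_sq_eq_one [Fintype α] {σ : Perm α} (hσ : σ ^ 2 = 1)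
    (h4 : 4 ∣ σ.support.card) : sign σ = 1 := by
  rw [sign_of_pow_two_eq_one hσ, card_fixedPoints, sum_cycleType,
    Nat.sub_sub_self (Finset.card_le_univ _)]
  obtain ⟨k, hk⟩ := h4
  rw [hk, show 4 * k / 2 = 2 * k by omega, pow_mul, neg_one_sq, one_pow]

end Equiv.Perm

def OnCommonLine {Ω : Type*} (B : Finset (Finset Ω)) (x y z : Ω) : Prop :=
  ∃ ℓ ∈ B, x ∈ ℓ ∧ y ∈ ℓ ∧ z ∈ ℓ

namespace IsElementaryMove

variable {Ω : Type*} [DecidableEq Ω] {B : Finset (Finset Ω)} {mv : Ω → Ω → Perm Ω}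
  {a b x : Ω}

theorem apply_left (hmv : IsElementaryMove B mv) (a b : Ω) : mv a b a = b := by
  by_cases hab : a = b
  · rw [hab, hmv.1]; rfl
  · exact (hmv.2.1 a b hab).1

theorem apply_right (hmv : IsElementaryMove B mv) (a b : Ω) : mv a b b = a := by
  by_cases hab : a = b
  · rw [hab, hmv.1]; rfl
  · exact (hmv.2.1 a b hab).2

theorem onCommonLine_of_apply_ne (hmv : IsElementaryMove B mv) (h : mv a b x ≠ x) :
    OnCommonLine B a b x := by
  by_contra hno
  by_cases hab : a = b
  · rw [hab, hmv.1] at h; exact h rfl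
  · exact h (hmv.2.2.2 a b x hab fun ℓ hℓ ⟨ha, hb, hx⟩ => hno ⟨ℓ, hℓ, ha, hb, hx⟩)

theorem exists_swap_on_line (hmv : IsElementaryMove B mv) (hB : ∀ ℓ ∈ B, ℓ.card = 4)
    {ℓ : Finset Ω} (hℓ : ℓ ∈ B) (ha : a ∈ ℓ) (hb : b ∈ ℓ) (hx : x ∈ ℓ) (hab : a ≠ b)
    (hxa : x ≠ a) (hxb : x ≠ b) :
    ∃ d ∈ ℓ, d ≠ x ∧ mv a b x = d ∧ mv b a x = d ∧ mv a b d = x := by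
  obtain ⟨d, rfl, hda, hdb, hdx⟩ :=
    Finset.exists_eq_insert_of_card_eq_four (hB ℓ hℓ) ha hb hx hab hxa.symm hxb.symm
  refine ⟨d, by simp, hdx, hmv.2.2.1 a b x d hab hℓ, hmv.2.2.1 b a x d hab.symm ?_,
    hmv.2.2.1 a b d x hab ?_⟩
  · rwa [Finset.insert_comm]
  · rwa [Finset.pair_comm d x]

theorem apply_apply (hmv : IsElementaryMove B mv) (hB : ∀ ℓ ∈ B, ℓ.card = 4) (a b x : Ω) :
    mv a b (mv a b x) = x := by
  by_cases hxa : x = a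
  · rw [hxa, hmv.apply_left, hmv.apply_right]
  by_cases hxb : x = b
  · rw [hxb, hmv.apply_right, hmv.apply_left]
  by_cases hfix : mv a b x = x
  · rw [hfix, hfix]
  obtain ⟨ℓ, hℓ, ha, hb, hx⟩ := hmv.onCommonLine_of_apply_ne hfix
  have hab : a ≠ b := fun h => hfix (by rw [h, hmv.1]; rfl)
  obtain ⟨d, -, -, hd, -, hdx⟩ := hmv.exists_swap_on_line hB hℓ ha hb hx hab hxa hxb
  rw [hd, hdx]

theorem mul_self (hmv : IsElementaryMove B mv) (hB : ∀ ℓ ∈ B, ℓ.card = 4) (a b : Ω) :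
    mv a b * mv a b = 1 :=
  Equiv.ext (hmv.apply_apply hB a b)

theorem comm (hmv : IsElementaryMove B mv) (hB : ∀ ℓ ∈ B, ℓ.card = 4) (a b : Ω) :
    mv a b = mv b a := by
  by_cases hab : a = b
  · rw [hab]
  ext x
  by_cases hxa : x = a
  · rw [hxa, hmv.apply_left, hmv.apply_right]
  by_cases hxb : x = b
  · rw [hxb, hmv.apply_left, hmv.apply_right]
  by_cases hfix : mv a b x = x ∧ mv b a x = x
  · rw [hfix.1, hfix.2]
  obtain ⟨ℓ, hℓ, ha, hb, hx⟩ : OnCommonLine B a b x := by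
    rcases not_and_or.1 hfix with h | h
    · exact hmv.onCommonLine_of_apply_ne h
    · obtain ⟨ℓ, hℓ, hb, ha, hx⟩ := hmv.onCommonLine_of_apply_ne h
      exact ⟨ℓ, hℓ, ha, hb, hx⟩
  obtain ⟨d, -, -, hd, hd', -⟩ := hmv.exists_swap_on_line hB hℓ ha hb hx hab hxa hxb
  rw [hd, hd']

theorem apply_ne_iff (hmv : IsElementaryMove B mv) (hB : ∀ ℓ ∈ B, ℓ.card = 4) (hab : a ≠ b) :
    mv a b x ≠ x ↔ OnCommonLine B a b x := by
  refine ⟨hmv.onCommonLine_of_apply_ne, fun ⟨ℓ, hℓ, ha, hb, hx⟩ => ?_⟩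
  by_cases hxa : x = a
  · rw [hxa, hmv.apply_left]; exact hab.symm
  by_cases hxb : x = b
  · rw [hxb, hmv.apply_right]; exact hab
  obtain ⟨d, -, hdx, hd, -⟩ := hmv.exists_swap_on_line hB hℓ ha hb hx hab hxa hxb
  rwa [hd]

theorem apply_mem (hmv : IsElementaryMove B mv) (hB : ∀ ℓ ∈ B, ℓ.card = 4) {ℓ : Finset Ω}
    (hℓ : ℓ ∈ B) (ha : a ∈ ℓ) (hb : b ∈ ℓ) (hx : x ∈ ℓ) : mv a b x ∈ ℓ := by
  by_cases hab : a = b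
  · rwa [hab, hmv.1]
  by_cases hxa : x = a
  · rwa [hxa, hmv.apply_left]
  by_cases hxb : x = b
  · rwa [hxb, hmv.apply_right]
  obtain ⟨d, hdℓ, -, hd, -⟩ := hmv.exists_swap_on_line hB hℓ ha hb hx hab hxa hxb
  rwa [hd]

end IsElementaryMove

theorem IsSupersimpleDesign.eq_of_three_mem {Ω : Type*} [DecidableEq Ω]
    {B : Finset (Finset Ω)} {lam : ℕ} (hD : IsSupersimpleDesign B lam) {ℓ₁ ℓ₂ : Finset Ω}
    (h₁ : ℓ₁ ∈ B) (h₂ : ℓ₂ ∈ B) {x y z : Ω} (hxy : x ≠ y) (hxz : x ≠ z) (hyz : y ≠ z)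
    (hx : x ∈ ℓ₁ ∩ ℓ₂) (hy : y ∈ ℓ₁ ∩ ℓ₂) (hz : z ∈ ℓ₁ ∩ ℓ₂) : ℓ₁ = ℓ₂ := by
  by_contra hne
  have h3 : ({x, y, z} : Finset Ω).card ≤ (ℓ₁ ∩ ℓ₂).card :=
    Finset.card_le_card (by simp [Finset.insert_subset_iff, hx, hy, hz])
  rw [Finset.card_insert_of_notMem (by simp [hxy, hxz]), Finset.card_pair hyz] at h3
  have := hD.2.2 ℓ₁ h₁ ℓ₂ h₂ hne
  omega

namespace IsElementaryMove

variable {Ω : Type*} [Fintype Ω] [DecidableEq Ω] {B : Finset (Finset Ω)} {lam : ℕ}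
  {mv : Ω → Ω → Perm Ω} {a b x : Ω}

theorem mem_support_iff (hmv : IsElementaryMove B mv) (hB : ∀ ℓ ∈ B, ℓ.card = 4) (hab : a ≠ b) :
    x ∈ (mv a b).support ↔ OnCommonLine B a b x :=
  Perm.mem_support.trans (hmv.apply_ne_iff hB hab)

/-- The lines through `a` and `b` meet only in `{a, b}`, and each contributes two more points. -/
theorem card_support (hmv : IsElementaryMove B mv) (hD : IsSupersimpleDesign B lam)
    (hab : a ≠ b) : (mv a b).support.card = 2 * lam + 2 := by
  set P := B.filter fun ℓ => a ∈ ℓ ∧ b ∈ ℓ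
  have hsupp : (mv a b).support = P.biUnion (· \ {a, b}) ∪ {a, b} := by
    ext x
    rw [hmv.mem_support_iff hD.1 hab]
    simp only [Finset.mem_union, Finset.mem_biUnion, Finset.mem_sdiff, Finset.mem_filter, P]
    constructor
    · rintro ⟨ℓ, hℓ, ha, hb, hx⟩
      by_cases hxab : x ∈ ({a, b} : Finset Ω)
      · exact Or.inr hxab
      · exact Or.inl ⟨ℓ, ⟨hℓ, ha, hb⟩, hx, hxab⟩
    · rintro (⟨ℓ, ⟨hℓ, ha, hb⟩, hx, -⟩ | hx)
      · exact ⟨ℓ, hℓ, ha, hb, hx⟩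
      · obtain ⟨ℓ, hℓ, ha, hb, -⟩ := hmv.onCommonLine_of_apply_ne (x := a)
          (by rw [hmv.apply_left]; exact hab.symm)
        simp only [Finset.mem_insert, Finset.mem_singleton] at hx
        rcases hx with rfl | rfl
        exacts [⟨ℓ, hℓ, ha, hb, ha⟩, ⟨ℓ, hℓ, ha, hb, hb⟩]
  have hdisj : Set.PairwiseDisjoint (P : Set (Finset Ω)) (· \ {a, b}) := by
    intro ℓ₁ h₁ ℓ₂ h₂ hne
    simp only [Finset.coe_filter, Set.mem_ofPred_eq, P] at h₁ h₂
    refine Finset.disjoint_left.2 fun x hx₁ hx₂ => hne ?_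
    simp only [Finset.mem_sdiff, Finset.mem_insert, Finset.mem_singleton, not_or] at hx₁ hx₂
    exact hD.eq_of_three_mem h₁.1 h₂.1 hab (Ne.symm hx₁.2.1) (Ne.symm hx₁.2.2)
      (Finset.mem_inter.2 ⟨h₁.2.1, h₂.2.1⟩) (Finset.mem_inter.2 ⟨h₁.2.2, h₂.2.2⟩)
      (Finset.mem_inter.2 ⟨hx₁.1, hx₂.1⟩)
  have hcard : ∀ ℓ ∈ P, (ℓ \ {a, b}).card = 2 := by
    intro ℓ hℓ
    simp only [Finset.mem_filter, P] at hℓ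
    rw [Finset.card_sdiff_of_subset (by simp [Finset.insert_subset_iff, hℓ.2.1, hℓ.2.2]),
      hD.1 ℓ hℓ.1, Finset.card_pair hab]
  rw [hsupp, Finset.card_union_of_disjoint (Finset.disjoint_left.2 fun x hx => by
      obtain ⟨ℓ, -, hxℓ⟩ := Finset.mem_biUnion.1 hx
      exact (Finset.mem_sdiff.1 hxℓ).2),
    Finset.card_biUnion hdisj, Finset.sum_congr rfl hcard, Finset.sum_const, smul_eq_mul,
    hD.2.1 a b hab, Finset.card_pair hab, mul_comm]

end IsElementaryMove

def TrivialTrianglesAt {Ω : Type*} (B : Finset (Finset Ω)) (mv : Ω → Ω → Perm Ω) (inf : Ω) :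
    Prop :=
  ∀ a b : Ω, a ≠ b → a ≠ inf → b ≠ inf → OnCommonLine B inf a b → mv inf a * mv a b * mv b inf = 1

namespace TrivialTrianglesAt

variable {Ω : Type*} [DecidableEq Ω] {B : Finset (Finset Ω)} {lam : ℕ}
  {mv : Ω → Ω → Perm Ω} {inf a b x y : Ω}

theorem mv_eq_mul (hT : TrivialTrianglesAt B mv inf) (hmv : IsElementaryMove B mv)
    (hB : ∀ ℓ ∈ B, ℓ.card = 4) (hab : a ≠ b) (ha : a ≠ inf) (hb : b ≠ inf)
    (h : OnCommonLine B inf a b) : mv a b = mv inf a * mv inf b := by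
  have h1 := hT a b hab ha hb h
  rw [mul_assoc] at h1
  rw [eq_mul_inv_of_mul_eq (eq_inv_of_mul_eq_one_right h1), hmv.comm hB b inf,
    inv_eq_of_mul_eq_one_left (hmv.mul_self hB inf a),
    inv_eq_of_mul_eq_one_left (hmv.mul_self hB inf b)]

theorem commute (hT : TrivialTrianglesAt B mv inf) (hmv : IsElementaryMove B mv)
    (hB : ∀ ℓ ∈ B, ℓ.card = 4) (h : OnCommonLine B inf x y) :
    Commute (mv inf x) (mv inf y) := by
  by_cases hx : x = inf
  · rw [hx, hmv.1]; exact Commute.one_left _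
  by_cases hy : y = inf
  · rw [hy, hmv.1]; exact Commute.one_right _
  by_cases hxy : x = y
  · rw [hxy]
  obtain ⟨ℓ, hℓ, hi, hxℓ, hyℓ⟩ := h
  rw [Commute, SemiconjBy, ← hT.mv_eq_mul hmv hB hxy hx hy ⟨ℓ, hℓ, hi, hxℓ, hyℓ⟩,
    ← hT.mv_eq_mul hmv hB (Ne.symm hxy) hy hx ⟨ℓ, hℓ, hi, hyℓ, hxℓ⟩, hmv.comm hB]

theorem onCommonLine_trans (hT : TrivialTrianglesAt B mv inf) (hmv : IsElementaryMove B mv)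
    (hD : IsSupersimpleDesign B lam) (ha : a ≠ inf) (hx : OnCommonLine B inf a x)
    (hy : OnCommonLine B inf a y) : OnCommonLine B inf x y := by
  obtain ⟨ℓ, hℓ, hiℓ, haℓ, hyℓ⟩ := hy
  by_cases hxa : x = a
  · subst hxa; exact ⟨ℓ, hℓ, hiℓ, haℓ, hyℓ⟩
  by_cases hxy : x = y
  · subst hxy; exact ⟨ℓ, hℓ, hiℓ, hyℓ, hyℓ⟩
  by_cases hxi : x = inf
  · subst hxi; exact ⟨ℓ, hℓ, hiℓ, hiℓ, hyℓ⟩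
  by_cases hya : y = a
  · obtain ⟨m, hm, him, ham, hxm⟩ := hx
    subst hya; exact ⟨m, hm, him, hxm, ham⟩
  by_cases hyi : y = inf
  · obtain ⟨m, hm, him, -, hxm⟩ := hx
    subst hyi; exact ⟨m, hm, him, hxm, him⟩
  by_contra hxy'
  -- `[a,x] = σ_a σ_x` moves `y` to the fourth point `d` of `ℓ = {∞, a, y, d}`,
  -- so the line through `a, x, y` shares `a, y, d` with `ℓ` and must be `ℓ`.
  have hσx : mv inf x y = y := by
    by_contra h
    obtain ⟨m, hm, him, hxm, hym⟩ := hmv.onCommonLine_of_apply_ne h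
    exact hxy' ⟨m, hm, him, hxm, hym⟩
  set d := mv inf a y
  have hdy : d ≠ y := (hmv.apply_ne_iff hD.1 (Ne.symm ha)).2 ⟨ℓ, hℓ, hiℓ, haℓ, hyℓ⟩
  have hda : d ≠ a := fun h => hyi <| (mv inf a).injective (h.trans (hmv.apply_left inf a).symm)
  have hmove : mv a x y = d := by
    rw [hT.mv_eq_mul hmv hD.1 (Ne.symm hxa) ha hxi hx, Perm.mul_apply, hσx]
  obtain ⟨m, hm, ham, hxm, hym⟩ := hmv.onCommonLine_of_apply_ne (hmove ▸ hdy)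
  have hdm : d ∈ m := hmove ▸ hmv.apply_mem hD.1 hm ham hxm hym
  have hdℓ : d ∈ ℓ := hmv.apply_mem hD.1 hℓ hiℓ haℓ hyℓ
  have hmℓ : m = ℓ := hD.eq_of_three_mem hm hℓ (Ne.symm hya) (Ne.symm hda) hdy.symm
    (Finset.mem_inter.2 ⟨ham, haℓ⟩) (Finset.mem_inter.2 ⟨hym, hyℓ⟩)
    (Finset.mem_inter.2 ⟨hdm, hdℓ⟩)
  exact hxy' ⟨ℓ, hℓ, hiℓ, hmℓ ▸ hxm, hyℓ⟩

end TrivialTrianglesAt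

namespace TrivialTrianglesAt

variable {Ω : Type*} [DecidableEq Ω] {B : Finset (Finset Ω)} {lam : ℕ}
  {mv : Ω → Ω → Perm Ω} {inf a b u : Ω}

theorem apply_eq_self (hT : TrivialTrianglesAt B mv inf) (hmv : IsElementaryMove B mv)
    (hD : IsSupersimpleDesign B lam) (ha : a ≠ inf) (hab : ¬OnCommonLine B inf a b)
    (hu : OnCommonLine B inf a u) (hua : u ≠ a) : mv a b u = u := by
  by_contra hmoved
  obtain ⟨m, hm, ham, hbm, hum⟩ := hmv.onCommonLine_of_apply_ne hmoved
  by_cases hui : u = inf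
  · exact hab ⟨m, hm, hui ▸ hum, ham, hbm⟩
  -- `b` lies on a line through `a` and `u`, so `[a,u] = σ_a σ_u` moves it.
  have hmoves : mv a u b ≠ b :=
    (hmv.apply_ne_iff hD.1 (Ne.symm hua)).2 ⟨m, hm, ham, hum, hbm⟩
  have hσu : mv inf u b = b := by
    by_contra h
    have hub : OnCommonLine B inf u b := hmv.onCommonLine_of_apply_ne h
    obtain ⟨ℓ, hℓ, hi, haℓ, huℓ⟩ := hu
    exact hab (hT.onCommonLine_trans hmv hD hui ⟨ℓ, hℓ, hi, huℓ, haℓ⟩ hub)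
  rw [hT.mv_eq_mul hmv hD.1 (Ne.symm hua) ha hui hu, Perm.mul_apply, hσu] at hmoves
  exact hab (hmv.onCommonLine_of_apply_ne hmoves)

theorem mv_mul_mul_mul_eq (hT : TrivialTrianglesAt B mv inf) (hmv : IsElementaryMove B mv)
    (hD : IsSupersimpleDesign B lam) (ha : a ≠ inf) (hab : ¬OnCommonLine B inf a b) :
    mv a b * mv inf a * mv a b * mv inf a = swap inf b * swap inf a := by
  have h := Perm.mul_mul_mul_eq_swap_mul_swap (hmv.apply_apply hD.1 inf a)
    (hmv.apply_apply hD.1 a b) (hmv.apply_left a b)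
    (by rw [hmv.apply_right]; exact ha.symm)
    (of_not_not fun h => hab (hmv.onCommonLine_of_apply_ne h))
    (fun x hx hxa => hT.apply_eq_self hmv hD ha hab (hmv.onCommonLine_of_apply_ne hx) hxa)
  rwa [hmv.apply_right] at h

theorem swap_mul_swap_mem_moveGroup (hT : TrivialTrianglesAt B mv inf)
    (hmv : IsElementaryMove B mv) (hD : IsSupersimpleDesign B lam) (ha : a ≠ inf)
    (hab : ¬OnCommonLine B inf a b) : swap inf b * swap inf a ∈ moveGroup mv := by
  have hmem : ∀ x y, mv x y ∈ moveGroup mv := fun x y => Subgroup.subset_closure ⟨x, y, rfl⟩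
  rw [← hT.mv_mul_mul_mul_eq hmv hD ha hab]
  exact mul_mem (mul_mem (mul_mem (hmem a b) (hmem inf a)) (hmem a b)) (hmem inf a)

theorem alternatingGroup_le_moveGroup [Fintype Ω] (hT : TrivialTrianglesAt B mv inf)
    (hmv : IsElementaryMove B mv) (hD : IsSupersimpleDesign B lam) {a₀ b₀ : Ω} (ha₀ : a₀ ≠ inf)
    (hb₀ : b₀ ≠ inf) (h₀ : ¬OnCommonLine B inf a₀ b₀) : alternatingGroup Ω ≤ moveGroup mv := by
  refine Perm.alternatingGroup_le_of_swap_mul_swap_mem inf fun p q hp hq => ?_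
  by_cases hpq : OnCommonLine B inf q p
  · -- `(∞ p)(∞ q) = (∞ p)(∞ e) · (∞ e)(∞ q)` for a point `e` outside the class of `p` and `q`
    obtain ⟨e, he, hpe⟩ : ∃ e, e ≠ inf ∧ ¬OnCommonLine B inf p e := by
      by_contra! h
      exact h₀ (hT.onCommonLine_trans hmv hD hp (h a₀ ha₀) (h b₀ hb₀))
    have hqe : ¬OnCommonLine B inf q e := fun h =>
      hpe (hT.onCommonLine_trans hmv hD hq hpq h)
    have hep : ¬OnCommonLine B inf e p := fun ⟨ℓ, hℓ, hi, he, hp⟩ => hpe ⟨ℓ, hℓ, hi, hp, he⟩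
    rw [← mul_one (swap inf p), ← swap_mul_self inf e, ← mul_assoc, mul_assoc _ _ (swap inf q)]
    exact mul_mem (hT.swap_mul_swap_mem_moveGroup hmv hD he hep)
      (hT.swap_mul_swap_mem_moveGroup hmv hD hq hqe)
  · exact hT.swap_mul_swap_mem_moveGroup hmv hD hq hpq

end TrivialTrianglesAt

namespace TrivialTrianglesAt

variable {Ω : Type*} [Fintype Ω] [DecidableEq Ω] {B : Finset (Finset Ω)} {lam : ℕ}
  {mv : Ω → Ω → Perm Ω} {inf a x : Ω}

theorem support_eq (hT : TrivialTrianglesAt B mv inf) (hmv : IsElementaryMove B mv)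
    (hD : IsSupersimpleDesign B lam) (ha : a ≠ inf) (hx : x ≠ inf)
    (hax : OnCommonLine B inf a x) : (mv inf x).support = (mv inf a).support := by
  have hxa : OnCommonLine B inf x a :=
    let ⟨ℓ, hℓ, hi, haℓ, hxℓ⟩ := hax
    ⟨ℓ, hℓ, hi, hxℓ, haℓ⟩
  ext y
  rw [hmv.mem_support_iff hD.1 (Ne.symm hx), hmv.mem_support_iff hD.1 (Ne.symm ha)]
  exact ⟨hT.onCommonLine_trans hmv hD hx hxa, hT.onCommonLine_trans hmv hD ha hax⟩

open scoped Pointwise in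
/-- The involutions `σ_x` for `x` collinear with `∞` and `a` generate an elementary abelian
`2`-group acting transitively on the support of `σ_a`, which therefore has `2`-power size. -/
theorem exists_two_mul_add_two_eq_pow (hT : TrivialTrianglesAt B mv inf)
    (hmv : IsElementaryMove B mv) (hD : IsSupersimpleDesign B lam) (ha : a ≠ inf) :
    ∃ k, 2 * lam + 2 = 2 ^ k := by
  set S := mv inf '' {x | OnCommonLine B inf a x}
  set E := Subgroup.closure S
  have h2 : IsPGroup 2 E := by
    refine fun g => ⟨1, Subtype.ext (Subgroup.sq_eq_one_of_mem_closure ?_ ?_ g.2)⟩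
    · rintro _ ⟨x, hx, rfl⟩ _ ⟨y, hy, rfl⟩
      exact hT.commute hmv hD.1 (hT.onCommonLine_trans hmv hD ha hx hy)
    · rintro _ ⟨x, -, rfl⟩
      exact (sq _).trans (hmv.mul_self hD.1 inf x)
  have horbit : MulAction.orbit E inf = ((mv inf a).support : Set Ω) := by
    apply Set.Subset.antisymm
    · have hE : E ≤ MulAction.stabilizer (Perm Ω) ((mv inf a).support : Set Ω) := by
        rw [Subgroup.closure_le]
        rintro _ ⟨x, hx, rfl⟩
        rw [SetLike.mem_coe, MulAction.mem_stabilizer_set]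
        intro y
        by_cases hxi : x = inf
        · rw [hxi, hmv.1, one_smul]
        rw [← hT.support_eq hmv hD ha hxi hx, Finset.mem_coe, Finset.mem_coe, Perm.smul_def,
          Perm.apply_mem_support]
      rintro _ ⟨g, rfl⟩
      change g • inf ∈ _
      rw [Subgroup.smul_def, MulAction.mem_stabilizer_set.1 (hE g.2), Finset.mem_coe,
        Perm.mem_support, hmv.apply_left]
      exact ha
    · intro y hy
      rw [Finset.mem_coe, hmv.mem_support_iff hD.1 (Ne.symm ha)] at hy
      exact ⟨⟨mv inf y, Subgroup.subset_closure ⟨y, hy, rfl⟩⟩, hmv.apply_left inf y⟩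
  obtain ⟨k, hk⟩ := h2.card_orbit inf
  rw [horbit, Nat.card_coe_set_eq, Set.ncard_coe_finset, hmv.card_support hD (Ne.symm ha)] at hk
  exact ⟨k, hk⟩

theorem odd_lam (hT : TrivialTrianglesAt B mv inf) (hmv : IsElementaryMove B mv)
    (hD : IsSupersimpleDesign B lam) (ha : a ≠ inf) : Odd lam := by
  obtain ⟨k, hk⟩ := hT.exists_two_mul_add_two_eq_pow hmv hD ha
  have hlam : lam ≠ 0 := by
    rw [← hD.2.1 inf a (Ne.symm ha)]
    obtain ⟨ℓ, hℓ, hi, haℓ, -⟩ :=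
      hmv.onCommonLine_of_apply_ne (x := inf) (by rw [hmv.apply_left]; exact ha)
    exact Finset.card_ne_zero.2 ⟨ℓ, Finset.mem_filter.2 ⟨hℓ, hi, haℓ⟩⟩
  rcases k with _ | _ | k
  · omega
  · omega
  · rw [pow_succ, pow_succ] at hk
    exact Nat.odd_iff.2 (by omega)

end TrivialTrianglesAt

theorem IsElementaryMove.moveGroup_le_alternatingGroup {Ω : Type*} [Fintype Ω] [DecidableEq Ω]
    {B : Finset (Finset Ω)} {lam : ℕ} {mv : Ω → Ω → Perm Ω} (hmv : IsElementaryMove B mv)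
    (hD : IsSupersimpleDesign B lam) (hodd : Odd lam) : moveGroup mv ≤ alternatingGroup Ω := by
  rw [moveGroup, Subgroup.closure_le]
  rintro _ ⟨a, b, rfl⟩
  by_cases hab : a = b
  · rw [hab, hmv.1]; exact one_mem _
  refine Perm.mem_alternatingGroup.2 (Perm.sign_eq_one_of_sq_eq_one
    ((sq _).trans (hmv.mul_self hD.1 a b)) ?_)
  obtain ⟨k, rfl⟩ := hodd
  exact ⟨k + 1, by rw [hmv.card_support hD hab]; ring⟩

theorem TrivialTrianglesAt.sq_eq_one_of_forall_onCommonLine {Ω : Type*} [DecidableEq Ω]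
    {B : Finset (Finset Ω)} {mv : Ω → Ω → Perm Ω} {inf : Ω} (hT : TrivialTrianglesAt B mv inf)
    (hmv : IsElementaryMove B mv) (hB : ∀ ℓ ∈ B, ℓ.card = 4)
    (hall : ∀ a b, a ≠ inf → b ≠ inf → OnCommonLine B inf a b) :
    ∀ g ∈ moveGroup mv, g ^ 2 = 1 := by
  have hle : moveGroup mv ≤ Subgroup.closure (Set.range (mv inf)) := by
    rw [moveGroup, Subgroup.closure_le]
    rintro _ ⟨a, b, rfl⟩
    have hσ : ∀ x, mv inf x ∈ Subgroup.closure (Set.range (mv inf)) :=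
      fun x => Subgroup.subset_closure ⟨x, rfl⟩
    by_cases ha : a = inf
    · rw [ha]; exact hσ b
    by_cases hb : b = inf
    · rw [hb, hmv.comm hB]; exact hσ a
    by_cases hab : a = b
    · rw [hab, hmv.1]; exact one_mem _
    rw [hT.mv_eq_mul hmv hB hab ha hb (hall a b ha hb)]
    exact mul_mem (hσ a) (hσ b)
  refine fun g hg => Subgroup.sq_eq_one_of_mem_closure ?_ ?_ (hle hg)
  · rintro _ ⟨x, rfl⟩ _ ⟨y, rfl⟩
    by_cases hx : x = inf
    · rw [hx, hmv.1, one_mul, mul_one]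
    by_cases hy : y = inf
    · rw [hy, hmv.1, one_mul, mul_one]
    exact hT.commute hmv hB (hall x y hx hy)
  · rintro _ ⟨x, rfl⟩
    exact (sq _).trans (hmv.mul_self hB inf x)

theorem stmt_16_general {Ω : Type*} [Fintype Ω] [DecidableEq Ω]
    (n lam : ℕ)
    (B : Finset (Finset Ω)) (hD : IsSupersimpleDesign B lam)
    (mv : Ω → Ω → Equiv.Perm Ω) (hmv : IsElementaryMove B mv)
    (inf : Ω)
    (hyp : ∀ a b : Ω, a ≠ b → a ≠ inf → b ≠ inf →
        (∃ ℓ ∈ B, inf ∈ ℓ ∧ a ∈ ℓ ∧ b ∈ ℓ) →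
        mv inf a * mv a b * mv b inf = 1) :
    (∀ g ∈ moveGroup mv, g ^ 2 = 1) ∨
    n = 13 ∨
    moveGroup mv = alternatingGroup Ω := by
  have hT : TrivialTrianglesAt B mv inf := hyp
  by_cases hall : ∀ a b, a ≠ inf → b ≠ inf → OnCommonLine B inf a b
  · exact Or.inl (hT.sq_eq_one_of_forall_onCommonLine hmv hD.1 hall)
  push Not at hall
  obtain ⟨a₀, b₀, ha₀, hb₀, h₀⟩ := hall
  exact Or.inr (Or.inr (le_antisymm
    (hmv.moveGroup_le_alternatingGroup hD (hT.odd_lam hmv hD ha₀))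
    (hT.alternatingGroup_le_moveGroup hmv hD ha₀ hb₀ h₀)))

theorem stmt_16 {Ω : Type*} [Fintype Ω] [DecidableEq Ω]
    (n lam : ℕ) (hn : Fintype.card Ω = n)
    (B : Finset (Finset Ω)) (hD : IsSupersimpleDesign B lam)
    (mv : Ω → Ω → Equiv.Perm Ω) (hmv : IsElementaryMove B mv)
    (inf : Ω)
    (hyp : ∀ a b : Ω, a ≠ b → a ≠ inf → b ≠ inf →
        (∃ ℓ ∈ B, inf ∈ ℓ ∧ a ∈ ℓ ∧ b ∈ ℓ) →
        mv inf a * mv a b * mv b inf = 1) :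
    (∀ g ∈ moveGroup mv, g ^ 2 = 1) ∨
    n = 13 ∨
    moveGroup mv = alternatingGroup Ω :=
  stmt_16_general n lam B hD mv hmv inf hyp
end

section
/- Let D = (Ω,B) be a supersimple 2-(n,4,λ) design, let ∞ ∈ Ω, and let G = π_∞(D) be the hole stabilizer. If n > 9λ + 1, then every element of G fixes ∞ and G acts primitively on Ω∖{∞}; that is: (i) for all x, y ∈ Ω∖{∞} there exists g ∈ G with g(x) = y, and (ii) every subset Δ ⊆ Ω∖{∞} that is a block for the G-action (meaning that for each g ∈ G the image g(Δ) either equals Δ or is disjoint from Δ) satisfies |Δ| ≤ 1 or Δ = Ω∖{∞}. -/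
/-!
The hole move `[∞,x][x,z][z,∞]` fixes `∞`, sends `x` to `z` when no line contains `∞, x, z`,
and fixes every point lying on no line through two of `∞, x, z`. Since the lines through two
points carry at most `2λ` further points, a hole move moves at most `6λ + 2` points.
Transitivity follows by moving `x` to `y` directly, or via a point off the lines
`∞x` and `∞y`.

Let `Δ` be a block with at least two points. If every pair of `Δ` is collinear with `∞`, then
`Δ` lies on the lines through `∞` and one of its points, so `|Δ| ≤ 2λ + 1`; and for `u, v ∈ Δ`
with `{∞, v, u, p}` a line, all hole moves from `v` to points off `6λ` exceptional points send
`u` to `p`, so they map `Δ` to one translate, which then covers all but `6λ` points: `n ≤ 8λ + 1`.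
Otherwise some `x, w ∈ Δ` are not collinear with `∞`, and hole moves from `x` fixing `w` show
that `Δ` misses at most `6λ + 1` points. If `Δ ≠ Ω ∖ {∞}`, counting translates shows that
`Ω ∖ {∞}` is `Δ` together with one translate `T`, and a hole move from `x` into `T` swaps the
two, moving every point other than `∞`: `n ≤ 6λ + 3`.
-/

open Finset Equiv

namespace SupersimpleDesign

variable {Ω : Type*}

theorem exists_eq_insert_of_card_eq_four [DecidableEq Ω] {ℓ : Finset Ω} (h : #ℓ = 4)
    {a b c : Ω} (ha : a ∈ ℓ) (hb : b ∈ ℓ) (hc : c ∈ ℓ) (hab : a ≠ b) (hac : a ≠ c)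
    (hbc : b ≠ c) : ∃ d, ℓ = {a, b, c, d} := by
  have hb' : b ∈ ℓ.erase a := mem_erase.2 ⟨hab.symm, hb⟩
  have hc' : c ∈ (ℓ.erase a).erase b := mem_erase.2 ⟨hbc.symm, mem_erase.2 ⟨hac.symm, hc⟩⟩
  obtain ⟨d, hd⟩ := card_eq_one.1 <| show #(((ℓ.erase a).erase b).erase c) = 1 by
    rw [card_erase_of_mem hc', card_erase_of_mem hb', card_erase_of_mem ha, h]
  refine ⟨d, ?_⟩
  rw [← hd, insert_erase hc', insert_erase hb', insert_erase ha]

theorem card_le_of_forall_mem [Fintype Ω] {s : Finset Ω} (h : ∀ z, z ∈ s) :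
    Fintype.card Ω ≤ #s :=
  card_univ (α := Ω) ▸ card_le_card fun z _ => h z

theorem exists_notMem_of_card_lt [Fintype Ω] {s : Finset Ω} (h : #s < Fintype.card Ω) :
    ∃ z, z ∉ s := by
  by_contra! hs
  exact (card_le_of_forall_mem hs).not_gt h

section Blocks

variable [DecidableEq Ω] {G : Subgroup (Perm Ω)} {D : Finset Ω} {g h : Perm Ω}

def IsBlockOf (G : Subgroup (Perm Ω)) (D : Finset Ω) : Prop :=
  ∀ g ∈ G, D.image g = D ∨ Disjoint (D.image g) D

theorem image_image_perm (g h : Perm Ω) : (D.image h).image g = D.image (g * h) := by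
  rw [image_image, Perm.coe_mul]

theorem notMem_image_of_apply_eq {a : Ω} (hg : g a = a) (ha : a ∉ D) : a ∉ D.image g := by
  rw [mem_image]
  rintro ⟨y, hy, hya⟩
  exact ha (g.injective (hya.trans hg.symm) ▸ hy)

namespace IsBlockOf

variable (hD : IsBlockOf G D)
include hD

theorem image_eq_image (hg : g ∈ G) (hh : h ∈ G) (hgh : ¬Disjoint (D.image g) (D.image h)) :
    D.image g = D.image h := by
  have hcomp : D.image g = (D.image (h⁻¹ * g)).image h := by
    rw [image_image_perm, mul_inv_cancel_left]
  rcases hD _ (mul_mem (inv_mem hh) hg) with heq | hdisj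
  · rw [hcomp, heq]
  · rw [hcomp, disjoint_image h.injective] at hgh
    exact absurd hdisj hgh

theorem image_eq_self {x : Ω} (hg : g ∈ G) (hx : x ∈ D) (hgx : g x ∈ D) : D.image g = D :=
  (hD g hg).resolve_right <| not_disjoint_iff.2 ⟨g x, mem_image_of_mem g hx, hgx⟩

theorem disjoint_image_self {x : Ω} (hg : g ∈ G) (hx : x ∈ D) (hgx : g x ∉ D) :
    Disjoint (D.image g) D :=
  (hD g hg).resolve_left fun h => hgx (h ▸ mem_image_of_mem g hx)

theorem apply_ne_self (hg : g ∈ G) (hh : h ∈ G) (hdisj : Disjoint (D.image h) D)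
    (hgh : D.image g = D.image h) {y : Ω} (hy : y ∈ D ∪ D.image h) : g y ≠ y := by
  intro hgy
  rcases mem_union.1 hy with hyD | hyT
  · exact disjoint_left.1 hdisj (hgh ▸ hgy ▸ mem_image_of_mem g hyD) hyD
  · have hT : D.image (g * h) = D.image h :=
      hD.image_eq_image (mul_mem hg hh) hh <| not_disjoint_iff.2
        ⟨y, image_image_perm (D := D) g h ▸ hgy ▸ mem_image_of_mem g hyT, hyT⟩
    rw [← image_image_perm] at hT
    have hhD : D.image h = D := (image_inj g.injective).1 (hT.trans hgh.symm)
    exact disjoint_left.1 hdisj hyT (hhD ▸ hyT)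

theorem mem_union_image_of_card_lt [Fintype Ω] {a : Ω} (hfix : ∀ g ∈ G, g a = a)
    (htrans : ∀ x y, x ≠ a → y ≠ a → ∃ g ∈ G, g x = y) (ha : a ∉ D) {x : Ω} (hx : x ∈ D)
    (hh : h ∈ G) (hdisj : Disjoint (D.image h) D) (hcard : Fintype.card Ω < 3 * #D + 1)
    {z : Ω} (hz : z ≠ a) : z ∈ D ∪ D.image h := by
  by_contra hzDT
  rw [mem_union, not_or] at hzDT
  obtain ⟨g, hg, rfl⟩ := htrans x z (ne_of_mem_of_not_mem hx ha) hz
  have hTg : Disjoint (D.image h) (D.image g) := by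
    by_contra hnd
    rw [disjoint_comm] at hnd
    exact hzDT.2 (hD.image_eq_image hg hh hnd ▸ mem_image_of_mem g hx)
  have hDTg : Disjoint (D ∪ D.image h) (D.image g) :=
    disjoint_union_left.2 ⟨(hD.disjoint_image_self hg hx hzDT.1).symm, hTg⟩
  have haT : a ∉ D ∪ D.image h ∪ D.image g := by
    simp only [mem_union, not_or]
    exact ⟨⟨ha, notMem_image_of_apply_eq (hfix h hh) ha⟩, notMem_image_of_apply_eq (hfix g hg) ha⟩
  have := card_le_card (subset_univ (insert a (D ∪ D.image h ∪ D.image g)))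
  rw [card_insert_of_notMem haT, card_union_of_disjoint hDTg, card_union_of_disjoint hdisj.symm,
    card_image_of_injective _ h.injective, card_image_of_injective _ g.injective, card_univ] at this
  omega

end IsBlockOf

end Blocks

section Design

variable {B : Finset (Finset Ω)} {lam : ℕ} {mv : Ω → Ω → Perm Ω} {inf : Ω}

def IsCollinear (B : Finset (Finset Ω)) (a b c : Ω) : Prop :=
  ∃ ℓ ∈ B, a ∈ ℓ ∧ b ∈ ℓ ∧ c ∈ ℓ

theorem IsCollinear.swap {a b c : Ω} : IsCollinear B a b c → IsCollinear B b a c :=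
  fun ⟨ℓ, hℓ, ha, hb, hc⟩ => ⟨ℓ, hℓ, hb, ha, hc⟩

theorem IsCollinear.rotate {a b c : Ω} : IsCollinear B a b c → IsCollinear B b c a :=
  fun ⟨ℓ, hℓ, ha, hb, hc⟩ => ⟨ℓ, hℓ, hb, hc, ha⟩

def holeMove (mv : Ω → Ω → Perm Ω) (inf a b : Ω) : Perm Ω :=
  mv inf a * mv a b * mv b inf

theorem holeMove_mem (a b : Ω) : holeMove mv inf a b ∈ holeStabilizer mv inf :=
  Subgroup.subset_closure ⟨a, b, rfl⟩

variable [DecidableEq Ω]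

def collinearWith (B : Finset (Finset Ω)) (p q : Ω) : Finset Ω :=
  (B.filter fun ℓ => p ∈ ℓ ∧ q ∈ ℓ).biUnion fun ℓ => (ℓ.erase p).erase q

theorem mem_collinearWith {p q w : Ω} :
    w ∈ collinearWith B p q ↔ w ≠ p ∧ w ≠ q ∧ IsCollinear B p q w := by
  simp only [collinearWith, mem_biUnion, mem_filter, mem_erase, IsCollinear]
  constructor
  · rintro ⟨ℓ, ⟨hℓ, hp, hq⟩, hwq, hwp, hw⟩
    exact ⟨hwp, hwq, ℓ, hℓ, hp, hq, hw⟩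
  · rintro ⟨hwp, hwq, ℓ, hℓ, hp, hq, hw⟩
    exact ⟨ℓ, ⟨hℓ, hp, hq⟩, hwq, hwp, hw⟩

theorem not_isCollinear_of_notMem {p q w : Ω} (hw : w ∉ collinearWith B p q) (hwp : w ≠ p)
    (hwq : w ≠ q) : ¬IsCollinear B p q w :=
  fun h => hw (mem_collinearWith.2 ⟨hwp, hwq, h⟩)

theorem card_collinearWith_le (hD : IsSupersimpleDesign B lam) {p q : Ω} (hpq : p ≠ q) :
    #(collinearWith B p q) ≤ 2 * lam :=
  calc #(collinearWith B p q)
      ≤ ∑ ℓ ∈ B.filter (fun ℓ => p ∈ ℓ ∧ q ∈ ℓ), #((ℓ.erase p).erase q) := card_biUnion_le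
    _ = ∑ _ℓ ∈ B.filter (fun ℓ => p ∈ ℓ ∧ q ∈ ℓ), 2 := by
      refine sum_congr rfl fun ℓ hℓ => ?_
      obtain ⟨hℓ, hp, hq⟩ := mem_filter.1 hℓ
      rw [card_erase_of_mem (mem_erase.2 ⟨hpq.symm, hq⟩), card_erase_of_mem hp, hD.1 ℓ hℓ]
    _ = 2 * lam := by rw [sum_const, hD.2.1 p q hpq, smul_eq_mul, mul_comm]

theorem card_collinearWith_triangle_le (hD : IsSupersimpleDesign B lam) {a b c : Ω}
    (hab : a ≠ b) (hbc : b ≠ c) (hac : a ≠ c) :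
    #(collinearWith B a b ∪ collinearWith B b c ∪ collinearWith B a c) ≤ 6 * lam := by
  have := card_collinearWith_le hD hab
  have := card_collinearWith_le hD hbc
  have := card_collinearWith_le hD hac
  grw [card_union_le, card_union_le]
  omega

variable (hmv : IsElementaryMove B mv)

include hmv

theorem move_apply_of_not_isCollinear {a b x : Ω} (hab : a ≠ b) (h : ¬IsCollinear B a b x) :
    mv a b x = x :=
  hmv.2.2.2 a b x hab fun ℓ hℓ hx => h ⟨ℓ, hℓ, hx⟩

theorem move_apply_left {a b : Ω} : mv a b a = b := by
  rcases eq_or_ne a b with rfl | hab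
  · rw [hmv.1]; rfl
  · exact (hmv.2.1 a b hab).1

theorem move_apply_right {a b : Ω} : mv a b b = a := by
  rcases eq_or_ne a b with rfl | hab
  · rw [hmv.1]; rfl
  · exact (hmv.2.1 a b hab).2

theorem holeMove_apply_hole (a b : Ω) : holeMove mv inf a b inf = inf := by
  simp only [holeMove, Perm.mul_apply, move_apply_right hmv]

theorem holeMove_apply_left {x z : Ω} (hx : x ≠ inf) (hz : z ≠ inf)
    (h : ¬IsCollinear B inf x z) : holeMove mv inf x z x = z := by
  simp only [holeMove, Perm.mul_apply]
  rw [move_apply_of_not_isCollinear hmv hz fun h' => h h'.rotate, move_apply_left hmv,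
    move_apply_of_not_isCollinear hmv hx.symm h]

theorem holeMove_apply_of_not_isCollinear {x z w : Ω} (hxz : x ≠ z) (hz : z ≠ inf)
    (h₂ : ¬IsCollinear B x z w) (h₃ : ¬IsCollinear B z inf w) :
    holeMove mv inf x z w = mv inf x w := by
  simp only [holeMove, Perm.mul_apply]
  rw [move_apply_of_not_isCollinear hmv hz h₃, move_apply_of_not_isCollinear hmv hxz h₂]

theorem apply_hole_of_mem_holeStabilizer {g : Perm Ω} (hg : g ∈ holeStabilizer mv inf) :
    g inf = inf :=
  (Subgroup.closure_le (MulAction.stabilizer (Perm Ω) inf)).2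
    (by rintro _ ⟨a, b, rfl⟩; exact holeMove_apply_hole hmv a b) hg

variable [Fintype Ω] (hD : IsSupersimpleDesign B lam)
include hD

theorem exists_mem_holeStabilizer_apply_eq (hcard : 4 * lam + 1 < Fintype.card Ω) {x y : Ω}
    (hx : x ≠ inf) (hy : y ≠ inf) : ∃ g ∈ holeStabilizer mv inf, g x = y := by
  rcases eq_or_ne x y with rfl | hxy
  · exact ⟨1, one_mem _, rfl⟩
  by_cases hcol : IsCollinear B inf x y
  · obtain ⟨z, hz⟩ : ∃ z, z ∉ insert inf (collinearWith B inf x ∪ collinearWith B inf y) := by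
      refine exists_notMem_of_card_lt (lt_of_le_of_lt ?_ hcard)
      grw [card_insert_le, card_union_le, card_collinearWith_le hD hx.symm,
        card_collinearWith_le hD hy.symm]
      omega
    simp only [mem_insert, mem_union, not_or] at hz
    obtain ⟨hzinf, hzx, hzy⟩ := hz
    have hxz : z ≠ x := fun h => hzy (h ▸ mem_collinearWith.2 ⟨hx, hxy, hcol.swap.rotate⟩)
    have hyz : z ≠ y := fun h => hzx (h ▸ mem_collinearWith.2 ⟨hy, hxy.symm, hcol⟩)
    refine ⟨holeMove mv inf z y * holeMove mv inf x z, mul_mem (holeMove_mem z y)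
      (holeMove_mem x z), ?_⟩
    rw [Perm.mul_apply, holeMove_apply_left hmv hx hzinf (not_isCollinear_of_notMem hzx hzinf hxz),
      holeMove_apply_left hmv hzinf hy fun h => not_isCollinear_of_notMem hzy hzinf hyz
        h.swap.rotate]
  · exact ⟨_, holeMove_mem x y, holeMove_apply_left hmv hx hy hcol⟩

theorem card_le_card_add_of_isBlockOf_of_not_isCollinear {D : Finset Ω}
    (hblock : IsBlockOf (holeStabilizer mv inf) D) (hinf : inf ∉ D) {x w : Ω} (hx : x ∈ D)
    (hw : w ∈ D) (hxw : x ≠ w) (hcol : ¬IsCollinear B inf x w) :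
    Fintype.card Ω ≤ #D + 6 * lam + 1 := by
  have hxinf : x ≠ inf := ne_of_mem_of_not_mem hx hinf
  have hwinf : w ≠ inf := ne_of_mem_of_not_mem hw hinf
  set C := collinearWith B inf x ∪ collinearWith B x w ∪ collinearWith B inf w
  -- A point `z` outside `D ∪ C` is reached from `x` by a hole move fixing `w ∈ D`.
  have hcover : ∀ z, z ∈ insert inf (D ∪ C) := by
    intro z
    by_contra hz
    simp only [C, mem_insert, mem_union, not_or] at hz
    obtain ⟨hzinf, hzD, ⟨hz₁, hz₂⟩, hz₃⟩ := hz
    have hzx : z ≠ x := fun h => hzD (h ▸ hx)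
    have hzw : z ≠ w := fun h => hzD (h ▸ hw)
    have hwfix : holeMove mv inf x z w = w := by
      rw [holeMove_apply_of_not_isCollinear hmv hzx.symm hzinf
          (fun h => not_isCollinear_of_notMem hz₂ hzx hzw h.swap.rotate)
          (fun h => not_isCollinear_of_notMem hz₃ hzinf hzw h.rotate),
        move_apply_of_not_isCollinear hmv hxinf.symm hcol]
    have hDfix := hblock.image_eq_self (holeMove_mem x z) hw (by rwa [hwfix])
    exact hzD <| hDfix ▸ mem_image.2
      ⟨x, hx, holeMove_apply_left hmv hxinf hzinf (not_isCollinear_of_notMem hz₁ hzinf hzx)⟩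
  calc Fintype.card Ω ≤ #(insert inf (D ∪ C)) := card_le_of_forall_mem hcover
    _ ≤ #D + #C + 1 := by grw [card_insert_le, card_union_le]
    _ ≤ #D + 6 * lam + 1 := by grw [card_collinearWith_triangle_le hD hxinf.symm hxw hwinf.symm]

theorem card_le_of_forall_holeMove_apply_ne {x z : Ω} (hx : x ≠ inf) (hz : z ≠ inf)
    (hxz : x ≠ z) (hmoved : ∀ y, y ≠ inf → holeMove mv inf x z y ≠ y) :
    Fintype.card Ω ≤ 6 * lam + 3 := by
  set C := collinearWith B inf x ∪ collinearWith B x z ∪ collinearWith B inf z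
  have hcover : ∀ y, y ∈ insert inf (insert x (insert z C)) := by
    intro y
    by_contra hy
    simp only [C, mem_insert, mem_union, not_or] at hy
    obtain ⟨hyinf, hyx, hyz, ⟨hy₁, hy₂⟩, hy₃⟩ := hy
    refine hmoved y hyinf ?_
    rw [holeMove_apply_of_not_isCollinear hmv hxz hz
        (not_isCollinear_of_notMem hy₂ hyx hyz) (fun h => not_isCollinear_of_notMem hy₃ hyinf hyz
          h.swap),
      move_apply_of_not_isCollinear hmv hx.symm (not_isCollinear_of_notMem hy₁ hyinf hyx)]
  calc Fintype.card Ω ≤ #(insert inf (insert x (insert z C))) := card_le_of_forall_mem hcover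
    _ ≤ #C + 3 := by grw [card_insert_le, card_insert_le, card_insert_le]
    _ ≤ 6 * lam + 3 := by grw [card_collinearWith_triangle_le hD hx.symm hxz hz.symm]

theorem card_le_of_isBlockOf_of_not_isCollinear {D : Finset Ω}
    (hblock : IsBlockOf (holeStabilizer mv inf) D) (hinf : inf ∉ D) {x w t : Ω} (hx : x ∈ D)
    (hw : w ∈ D) (hxw : x ≠ w) (hcol : ¬IsCollinear B inf x w) (ht : t ≠ inf) (htD : t ∉ D) :
    Fintype.card Ω ≤ 9 * lam + 1 := by
  by_contra! hcard
  have hxinf : x ≠ inf := ne_of_mem_of_not_mem hx hinf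
  have hsmall :=
    card_le_card_add_of_isBlockOf_of_not_isCollinear hmv hD hblock hinf hx hw hxw hcol
  have hlarge : #D + 2 ≤ Fintype.card Ω := by
    have := card_le_univ (insert t (insert inf D))
    rwa [card_insert_of_notMem (by simp [ht, htD]), card_insert_of_notMem hinf] at this
  have htrans : ∀ a b, a ≠ inf → b ≠ inf → ∃ g ∈ holeStabilizer mv inf, g a = b :=
    fun a b ha hb => exists_mem_holeStabilizer_apply_eq hmv hD (by omega) ha hb
  obtain ⟨g, hg, rfl⟩ := htrans x t hxinf ht
  have hdisj := hblock.disjoint_image_self hg hx htD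
  have hcover (z : Ω) : z ∈ insert inf (D ∪ D.image g) :=
    mem_insert.2 <| (eq_or_ne z inf).imp_right <| hblock.mem_union_image_of_card_lt
      (fun _ => apply_hole_of_mem_holeStabilizer hmv) htrans hinf hx hg hdisj (by omega)
  have hhalf : Fintype.card Ω ≤ 2 * #D + 1 := by
    have := card_le_of_forall_mem hcover
    grw [card_insert_le, card_union_le, card_image_le] at this
    omega
  obtain ⟨t', ht'T, ht'⟩ : ∃ t' ∈ D.image g, t' ∉ collinearWith B inf x := by
    refine exists_mem_notMem_of_card_lt_card ?_
    grw [card_image_of_injective _ g.injective, card_collinearWith_le hD hxinf.symm]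
    omega
  have ht'inf : t' ≠ inf := ne_of_mem_of_not_mem ht'T
    (notMem_image_of_apply_eq (apply_hole_of_mem_holeStabilizer hmv hg) hinf)
  have hxt' : x ≠ t' := ne_of_mem_of_not_mem hx (disjoint_left.1 hdisj ht'T)
  -- the hole move from `x` to `t'` swaps `D` and `g D`, so it fixes no point but `inf`
  have hxt'x : holeMove mv inf x t' x = t' :=
    holeMove_apply_left hmv hxinf ht'inf (not_isCollinear_of_notMem ht' ht'inf hxt'.symm)
  have hswap : D.image (holeMove mv inf x t') = D.image g :=
    hblock.image_eq_image (holeMove_mem x t') hg <|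
      not_disjoint_iff.2 ⟨t', mem_image.2 ⟨x, hx, hxt'x⟩, ht'T⟩
  have := card_le_of_forall_holeMove_apply_ne hmv hD hxinf ht'inf hxt' fun y hy =>
    hblock.apply_ne_self (holeMove_mem x t') hg hdisj hswap
      ((mem_insert.1 (hcover y)).resolve_left hy)
  omega

theorem card_le_of_isBlockOf_of_forall_isCollinear {D : Finset Ω}
    (hblock : IsBlockOf (holeStabilizer mv inf) D) (hinf : inf ∉ D) {u v : Ω} (hu : u ∈ D)
    (hv : v ∈ D) (huv : u ≠ v) (hcol : ∀ a ∈ D, ∀ b ∈ D, a ≠ b → IsCollinear B inf a b) :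
    Fintype.card Ω ≤ 8 * lam + 1 := by
  have huinf : u ≠ inf := ne_of_mem_of_not_mem hu hinf
  have hvinf : v ≠ inf := ne_of_mem_of_not_mem hv hinf
  obtain ⟨ℓ, hℓ, hinfℓ, hvℓ, huℓ⟩ := hcol v hv u hu huv.symm
  obtain ⟨p, rfl⟩ := exists_eq_insert_of_card_eq_four (hD.1 ℓ hℓ) hinfℓ hvℓ huℓ hvinf.symm
    huinf.symm huv.symm
  set C := collinearWith B inf u ∪ collinearWith B u v ∪ collinearWith B inf v
  have hmove (z : Ω) (hz : z ∉ C) : holeMove mv inf v z v = z ∧ holeMove mv inf v z u = p := by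
    simp only [C, mem_union, not_or] at hz
    obtain ⟨⟨hz₁, hz₂⟩, hz₃⟩ := hz
    have hzinf : z ≠ inf := fun h => hz₂ <| h ▸ mem_collinearWith.2
      ⟨huinf.symm, hvinf.symm, (hcol u hu v hv huv).rotate⟩
    have hzu : z ≠ u := fun h => hz₃ <| h ▸ mem_collinearWith.2
      ⟨huinf, huv, hcol v hv u hu huv.symm⟩
    have hzv : z ≠ v := fun h => hz₁ <| h ▸ mem_collinearWith.2
      ⟨hvinf, huv.symm, hcol u hu v hv huv⟩
    refine ⟨holeMove_apply_left hmv hvinf hzinf (not_isCollinear_of_notMem hz₃ hzinf hzv), ?_⟩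
    rw [holeMove_apply_of_not_isCollinear hmv hzv.symm hzinf
        (fun h => not_isCollinear_of_notMem hz₂ hzu hzv h.rotate.rotate)
        (fun h => not_isCollinear_of_notMem hz₁ hzinf hzu h.rotate),
      hmv.2.2.1 inf v u p hvinf.symm hℓ]
  have hC : #C ≤ 6 * lam := card_collinearWith_triangle_le hD huinf.symm huv hvinf.symm
  by_contra! hcard
  obtain ⟨z₀, hz₀⟩ := exists_notMem_of_card_lt (s := C) (by omega)
  have hcover (z : Ω) : z ∈ C ∪ D.image (holeMove mv inf v z₀) := by
    by_cases hz : z ∈ C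
    · exact mem_union_left _ hz
    · obtain ⟨hzv, hzu⟩ := hmove z hz
      have hT := hblock.image_eq_image (holeMove_mem v z) (holeMove_mem v z₀) <|
        not_disjoint_iff.2 ⟨p, mem_image.2 ⟨u, hu, hzu⟩, mem_image.2 ⟨u, hu, (hmove z₀ hz₀).2⟩⟩
      exact mem_union_right _ (hT ▸ mem_image.2 ⟨v, hv, hzv⟩)
  have hDsmall : D ⊆ insert u (collinearWith B inf u) := by
    intro w hw
    rcases eq_or_ne w u with rfl | hwu
    · exact mem_insert_self _ _
    · exact mem_insert_of_mem <| mem_collinearWith.2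
        ⟨ne_of_mem_of_not_mem hw hinf, hwu, hcol u hu w hw hwu.symm⟩
  have := card_le_of_forall_mem hcover
  grw [card_union_le, card_image_le, card_le_card hDsmall, card_insert_le,
    card_collinearWith_le hD huinf.symm] at this
  omega

theorem card_le_one_or_eq_erase_of_isBlockOf (hcard : 9 * lam + 1 < Fintype.card Ω)
    {D : Finset Ω} (hblock : IsBlockOf (holeStabilizer mv inf) D) (hinf : inf ∉ D) :
    #D ≤ 1 ∨ D = univ.erase inf := by
  by_contra! h
  obtain ⟨hD1, hne⟩ := h
  obtain ⟨u, hu, v, hv, huv⟩ := one_lt_card.1 hD1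
  obtain ⟨t, htD, ht⟩ : ∃ t ∉ D, t ≠ inf := by
    by_contra! h
    refine hne (Subset.antisymm (fun a ha => mem_erase.2 ⟨ne_of_mem_of_not_mem ha hinf,
      mem_univ a⟩) fun a ha => ?_)
    by_contra haD
    exact (mem_erase.1 ha).1 (h a haD)
  by_cases hcol : ∃ x ∈ D, ∃ w ∈ D, x ≠ w ∧ ¬IsCollinear B inf x w
  · obtain ⟨x, hx, w, hw, hxw, hxw'⟩ := hcol
    have := card_le_of_isBlockOf_of_not_isCollinear hmv hD hblock hinf hx hw hxw hxw' ht htD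
    omega
  · have := card_le_of_isBlockOf_of_forall_isCollinear hmv hD hblock hinf hu hv huv
      fun a ha b hb hab => by_contra fun h => hcol ⟨a, ha, b, hb, hab, h⟩
    omega

end Design

end SupersimpleDesign

open SupersimpleDesign

theorem stmt_17 {Ω : Type*} [Fintype Ω] [DecidableEq Ω]
    (n lam : ℕ) (hn : Fintype.card Ω = n)
    (B : Finset (Finset Ω)) (hD : IsSupersimpleDesign B lam)
    (mv : Ω → Ω → Equiv.Perm Ω) (hmv : IsElementaryMove B mv)
    (inf : Ω)
    (hcard : n > 9 * lam + 1) :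
    (∀ g ∈ holeStabilizer mv inf, g inf = inf) ∧
    (∀ x y : Ω, x ≠ inf → y ≠ inf → ∃ g ∈ holeStabilizer mv inf, g x = y) ∧
    (∀ Δ : Set Ω, Δ ⊆ {x | x ≠ inf} →
        (∀ g ∈ holeStabilizer mv inf, (⇑g) '' Δ = Δ ∨ Disjoint ((⇑g) '' Δ) Δ) →
        Δ.Subsingleton ∨ Δ = {x | x ≠ inf}) := by
  refine ⟨fun g hg => apply_hole_of_mem_holeStabilizer hmv hg,
    fun x y hx hy => exists_mem_holeStabilizer_apply_eq hmv hD (by omega) hx hy,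
    fun Δ hΔ hblock => ?_⟩
  lift Δ to Finset Ω using Δ.toFinite
  have hblock' : IsBlockOf (holeStabilizer mv inf) Δ := fun g hg => by
    simpa only [← coe_image, coe_inj, disjoint_coe] using hblock g hg
  rw [← card_le_one_iff_subsingleton]
  refine (card_le_one_or_eq_erase_of_isBlockOf hmv hD (by omega) hblock'
    fun h => hΔ h rfl).imp_right fun h => ?_
  ext
  simp [h]
end
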